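/- arXiv:1202.0518 — 4 statements merged into one kernel-verified Lean document; each statement's English description precedes it below -/
import Mathlib

section
/- (Gentle operator lemma for ensembles) Let {p(x), ρ_x} be a finite ensemble of density operators with average state ρ = Σ_x p(x) ρ_x, and let Λ satisfy 0 ≤ Λ ≤ I and Tr[Λρ] ≥ 1 − ε. Then Σ_x p(x)·‖√Λ ρ_x √Λ − ρ_x‖₁ ≤ 2√ε. -/
open Matrix
open scoped ComplexOrder

/-- The square root of a positive semidefinite matrix, as `Matrix.PosSemidef.sqrt` was defined
in older Mathlib. -/
noncomputable def Matrix.PosSemidef.oldSqrt {n : Type*} [Fintype n] [DecidableEq n]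
    {A : Matrix n n ℂ} (hA : A.PosSemidef) : Matrix n n ℂ :=
  hA.1.eigenvectorUnitary.1 * diagonal ((↑) ∘ (Real.sqrt ·) ∘ hA.1.eigenvalues) *
    (star hA.1.eigenvectorUnitary : Matrix n n ℂ)

/-- The trace norm ‖A‖₁ = Tr √(AᴴA) of a complex matrix. -/
noncomputable def traceNorm {n : Type*} [Fintype n] [DecidableEq n] (A : Matrix n n ℂ) : ℝ :=
  ((Matrix.posSemidef_conjTranspose_mul_self A).oldSqrt.trace).re

/-! For a single state σ, √Λ σ √Λ − σ = −((1 − √Λ) σ + √Λ σ (1 − √Λ)). Its trace norm is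
attained by pairing with a unitary (the sign of this Hermitian matrix), and Cauchy–Schwarz for the
semi-inner product Tr(B σ Aᴴ) bounds each of the two terms by √Tr((1 − √Λ)² σ) ≤ √Tr((1 − Λ) σ);
the last step is the operator inequality (1 − √Λ)² ≤ 1 − Λ, which for 0 ≤ Λ ≤ 1 amounts to
Λ ≤ √Λ. Averaging 2 √Tr((1 − Λ) ρₓ) over the ensemble, concavity of √ bounds the result by
2 √Tr((1 − Λ) ρ) ≤ 2 √ε. -/

open scoped MatrixOrder

theorem CFC.one_sub_sqrt_mul_one_sub_sqrt_le {A : Type*} [CStarAlgebra A] [PartialOrder A]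
    [StarOrderedRing A] {a : A} (ha₀ : 0 ≤ a) (ha₁ : a ≤ 1) :
    (1 - CFC.sqrt a) * (1 - CFC.sqrt a) ≤ 1 - a := by
  set s := CFC.sqrt a
  have hs₀ : 0 ≤ s := CFC.sqrt_nonneg a
  have hs₁ : s ≤ 1 := by simpa using CFC.sqrt_le_sqrt a 1 ha₁
  have hss : s * s = a := CFC.sqrt_mul_sqrt_self a ha₀
  have has : a ≤ s := by
    set t := CFC.sqrt s
    have htt : t * t = s := CFC.sqrt_mul_sqrt_self s hs₀
    calc a = t * s * t := by rw [← hss, ← htt]; noncomm_ring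
      _ ≤ t * 1 * t := conjugate_le_conjugate_of_nonneg hs₁ (CFC.sqrt_nonneg s)
      _ = s := by rw [mul_one, htt]
  have hexpand : 1 - a - (1 - s) * (1 - s) = (s - a) + (s - a) := by
    rw [← hss]; noncomm_ring
  rw [← sub_nonneg, hexpand]
  exact add_nonneg (sub_nonneg.mpr has) (sub_nonneg.mpr has)

theorem Real.sum_mul_sqrt_le_sqrt_sum_mul {ι : Type*} {s : Finset ι} {p e : ι → ℝ}
    (hp₀ : ∀ i ∈ s, 0 ≤ p i) (hp₁ : ∑ i ∈ s, p i = 1) (he : ∀ i ∈ s, 0 ≤ e i) :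
    ∑ i ∈ s, p i * √(e i) ≤ √(∑ i ∈ s, p i * e i) := by
  simpa only [smul_eq_mul] using Real.strictConcaveOn_sqrt.concaveOn.le_map_sum hp₀ hp₁ he

section Matrices

variable {n : Type*} [Fintype n]

theorem Matrix.PosSemidef.norm_trace_mul_mul_le {ρ : Matrix n n ℂ} (hρ : ρ.PosSemidef)
    (A B : Matrix n n ℂ) :
    ‖(A * ρ * B).trace‖ ≤ √(A * ρ * Aᴴ).trace.re * √(Bᴴ * ρ * B).trace.re := by
  let := ρ.toMatrixSeminormedAddCommGroup hρ
  let := ρ.toMatrixInnerProductSpace hρ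
  have h := norm_inner_le_norm (𝕜 := ℂ) Bᴴ A
  rw [norm_eq_sqrt_re_inner (𝕜 := ℂ) A, norm_eq_sqrt_re_inner (𝕜 := ℂ) Bᴴ, mul_comm] at h
  have hBA : inner ℂ Bᴴ A = (A * ρ * B).trace := by
    show (A * ρ * Bᴴᴴ).trace = _
    rw [conjTranspose_conjTranspose]
  have hBB : inner ℂ Bᴴ Bᴴ = (Bᴴ * ρ * B).trace := by
    show (Bᴴ * ρ * Bᴴᴴ).trace = _
    rw [conjTranspose_conjTranspose]
  rw [hBA, hBB] at h
  exact h

variable [DecidableEq n]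

theorem Matrix.PosSemidef.norm_trace_unitary_mul_le {ρ U : Matrix n n ℂ} (hρ : ρ.PosSemidef)
    (hU : U ∈ unitary (Matrix n n ℂ)) (A B : Matrix n n ℂ) :
    ‖(U * A * ρ * B).trace‖ ≤ √(Aᴴ * A * ρ).trace.re * √(B * Bᴴ * ρ).trace.re := by
  have h := hρ.norm_trace_mul_mul_le (U * A) B
  have hUA : (U * A * ρ * (U * A)ᴴ).trace = (Aᴴ * A * ρ).trace := by
    rw [conjTranspose_mul, ← star_eq_conjTranspose U, trace_mul_cycle, ← mul_assoc,
      mul_assoc Aᴴ, Unitary.star_mul_self_of_mem hU, mul_one]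
  have hB : (Bᴴ * ρ * B).trace = (B * Bᴴ * ρ).trace := by
    rw [trace_mul_cycle, mul_assoc]
  rw [hUA, hB] at h
  simpa only [mul_assoc] using h

theorem Matrix.re_trace_mul_le_of_le {A B ρ : Matrix n n ℂ} (hAB : A ≤ B) (hρ : ρ.PosSemidef) :
    (A * ρ).trace.re ≤ (B * ρ).trace.re := by
  set R := CFC.sqrt ρ
  have hconj : 0 ≤ R * (B - A) * R :=
    conjugate_nonneg_of_nonneg (sub_nonneg.mpr hAB) (CFC.sqrt_nonneg ρ)
  have htr : (B * ρ).trace - (A * ρ).trace = (R * (B - A) * R).trace := by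
    rw [← trace_sub, ← sub_mul, ← CFC.sqrt_mul_sqrt_self ρ hρ.nonneg, ← mul_assoc,
      trace_mul_comm, mul_assoc]
  have := (Complex.nonneg_iff.mp hconj.posSemidef.trace_nonneg).1
  rw [← htr, Complex.sub_re] at this
  linarith

theorem Matrix.IsHermitian.exists_mem_unitary_abs_eq {M : Matrix n n ℂ} (hM : M.IsHermitian) :
    ∃ U ∈ unitary (Matrix n n ℂ), CFC.abs M = U * M := by
  let sgn : ℝ → ℝ := fun x => if 0 ≤ x then 1 else -1
  have hcont : ContinuousOn sgn (spectrum ℝ M) := M.finite_real_spectrum.continuousOn _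
  refine ⟨cfc sgn M, ?_, ?_⟩
  · rw [Unitary.mem_iff, (cfc_predicate sgn M).star_eq, ← cfc_mul sgn sgn M, and_self]
    refine (cfc_congr fun x _ => ?_).trans (cfc_one ℝ M)
    by_cases hx : 0 ≤ x <;> simp [sgn, hx]
  · rw [CFC.abs_eq_cfc_norm M]
    conv_rhs => arg 2; rw [← cfc_id' ℝ M]
    rw [← cfc_mul sgn _ M]
    refine cfc_congr fun x _ => ?_
    by_cases hx : 0 ≤ x
    · simp [sgn, hx, abs_of_nonneg hx]
    · simp [sgn, hx, abs_of_neg (not_le.mp hx)]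

theorem Matrix.PosSemidef.oldSqrt_eq_sqrt {A : Matrix n n ℂ} (hA : A.PosSemidef) :
    hA.oldSqrt = CFC.sqrt A := by
  rw [CFC.sqrt_eq_real_sqrt A hA.nonneg, cfcₙ_eq_cfc, hA.1.cfc_eq, IsHermitian.cfc,
    Unitary.conjStarAlgAut_apply]
  rfl

theorem traceNorm_eq_re_trace_abs (A : Matrix n n ℂ) : traceNorm A = (CFC.abs A).trace.re := by
  rw [traceNorm, PosSemidef.oldSqrt_eq_sqrt]
  rfl

open scoped Matrix.Norms.L2Operator in
theorem traceNorm_sqrt_mul_mul_sqrt_sub_le {Λ ρ : Matrix n n ℂ} (hΛ : Λ.PosSemidef) (hΛ₁ : Λ ≤ 1)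
    (hρ : ρ.PosSemidef) (hρtr : ρ.trace = 1) :
    traceNorm (CFC.sqrt Λ * ρ * CFC.sqrt Λ - ρ) ≤ 2 * √((1 - Λ) * ρ).trace.re := by
  set S := CFC.sqrt Λ
  have hS : Sᴴ = S := (CFC.sqrt_nonneg Λ).posSemidef.isHermitian.eq
  have hSS : S * S = Λ := CFC.sqrt_mul_sqrt_self Λ hΛ.nonneg
  have hdefect : ((1 - S) * (1 - S) * ρ).trace.re ≤ ((1 - Λ) * ρ).trace.re :=
    re_trace_mul_le_of_le (CFC.one_sub_sqrt_mul_one_sub_sqrt_le hΛ.nonneg hΛ₁) hρ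
  have hΛρ : (Λ * ρ).trace.re ≤ 1 := by
    simpa [hρtr] using re_trace_mul_le_of_le hΛ₁ hρ
  have hM : (S * ρ * S - ρ).IsHermitian := by
    simp [IsHermitian, conjTranspose_sub, conjTranspose_mul, hS, hρ.isHermitian.eq, mul_assoc]
  obtain ⟨U, hU, habs⟩ := hM.exists_mem_unitary_abs_eq
  have hsplit : U * (S * ρ * S - ρ) = -(U * (1 - S) * ρ + U * S * ρ * (1 - S)) := by
    noncomm_ring
  have h₁ := hρ.norm_trace_unitary_mul_le hU (1 - S) 1
  have h₂ := hρ.norm_trace_unitary_mul_le hU S (1 - S)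
  simp only [conjTranspose_sub, conjTranspose_one, hS, hSS, mul_one, one_mul, hρtr,
    Complex.one_re, Real.sqrt_one] at h₁ h₂
  rw [traceNorm_eq_re_trace_abs, habs, hsplit, trace_neg, trace_add, Complex.neg_re,
    Complex.add_re]
  set e := ((1 - Λ) * ρ).trace.re
  have hsqrt₁ : √((1 - S) * (1 - S) * ρ).trace.re ≤ √e := Real.sqrt_le_sqrt hdefect
  have hsqrt₂ : √(Λ * ρ).trace.re ≤ 1 := Real.sqrt_le_one.mpr hΛρ
  have hneg (z : ℂ) : -z.re ≤ ‖z‖ := (neg_le_abs z.re).trans (Complex.abs_re_le_norm z)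
  calc -((U * (1 - S) * ρ).trace.re + (U * S * ρ * (1 - S)).trace.re)
      ≤ ‖(U * (1 - S) * ρ).trace‖ + ‖(U * S * ρ * (1 - S)).trace‖ := by
        linarith [hneg (U * (1 - S) * ρ).trace, hneg (U * S * ρ * (1 - S)).trace]
    _ ≤ √e + 1 * √e :=
        add_le_add (h₁.trans hsqrt₁)
          (h₂.trans (mul_le_mul hsqrt₂ hsqrt₁ (Real.sqrt_nonneg _) zero_le_one))
    _ = 2 * √e := by ring

theorem sum_mul_re_trace_one_sub_mul {X : Type*} [Fintype X] {p : X → ℝ} (hp₁ : ∑ x, p x = 1)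
    {ρ : X → Matrix n n ℂ} (hρtr : ∀ x, (ρ x).trace = 1) (Λ : Matrix n n ℂ) :
    ∑ x, p x * ((1 - Λ) * ρ x).trace.re = 1 - (Λ * ∑ x, (p x : ℂ) • ρ x).trace.re := by
  simp only [sub_mul, one_mul, trace_sub, hρtr, Complex.sub_re, Complex.one_re, mul_sub, mul_one,
    Finset.sum_sub_distrib, hp₁, Finset.mul_sum, Matrix.mul_smul, trace_sum, trace_smul,
    Complex.re_sum, smul_eq_mul, Complex.re_ofReal_mul]

end Matrices

theorem gentle_operator_ensembles_general {d X : Type*} [Fintype d] [DecidableEq d] [Fintype X]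
    (p : X → ℝ) (hp0 : ∀ x, 0 ≤ p x) (hp1 : ∑ x, p x = 1)
    (ρ : X → Matrix d d ℂ)
    (hρ : ∀ x, (ρ x).PosSemidef) (hρtr : ∀ x, (ρ x).trace = 1)
    (Λ : Matrix d d ℂ) (hΛ : Λ.PosSemidef) (hΛI : ((1 : Matrix d d ℂ) - Λ).PosSemidef)
    (ε : ℝ)
    (hsucc : 1 - ε ≤ (Λ * ∑ x, (p x : ℂ) • ρ x).trace.re) :
    ∑ x, p x * traceNorm (hΛ.oldSqrt * ρ x * hΛ.oldSqrt - ρ x) ≤ 2 * Real.sqrt ε := by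
  have hΛ₁ : Λ ≤ 1 := Matrix.le_iff.mpr hΛI
  have hdefect_nonneg (x : X) : 0 ≤ ((1 - Λ) * ρ x).trace.re := by
    simpa using re_trace_mul_le_of_le hΛI.nonneg (hρ x)
  calc ∑ x, p x * traceNorm (hΛ.oldSqrt * ρ x * hΛ.oldSqrt - ρ x)
      ≤ ∑ x, p x * (2 * √((1 - Λ) * ρ x).trace.re) := by
        rw [hΛ.oldSqrt_eq_sqrt]
        gcongr with x
        · exact hp0 x
        · exact traceNorm_sqrt_mul_mul_sqrt_sub_le hΛ hΛ₁ (hρ x) (hρtr x)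
    _ = 2 * ∑ x, p x * √((1 - Λ) * ρ x).trace.re := by
        simp only [Finset.mul_sum, mul_left_comm (2 : ℝ)]
    _ ≤ 2 * √(∑ x, p x * ((1 - Λ) * ρ x).trace.re) := by
        gcongr
        exact Real.sum_mul_sqrt_le_sqrt_sum_mul (fun x _ => hp0 x) hp1 (fun x _ => hdefect_nonneg x)
    _ ≤ 2 * Real.sqrt ε := by
        rw [sum_mul_re_trace_one_sub_mul hp1 hρtr]
        gcongr
        linarith

/-- Gentle operator lemma for ensembles: if a measurement operator 0 ≤ Λ ≤ I succeeds
with probability at least 1 − ε on the average state ρ = Σ_x p(x) ρ_x of a finite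
ensemble of density operators, then the expected trace distance satisfies
Σ_x p(x) ‖√Λ ρ_x √Λ − ρ_x‖₁ ≤ 2√ε. -/
theorem gentle_operator_ensembles {d X : Type*} [Fintype d] [DecidableEq d] [Fintype X]
    (p : X → ℝ) (hp0 : ∀ x, 0 ≤ p x) (hp1 : ∑ x, p x = 1)
    (ρ : X → Matrix d d ℂ)
    (hρ : ∀ x, (ρ x).PosSemidef) (hρtr : ∀ x, (ρ x).trace = 1)
    (Λ : Matrix d d ℂ) (hΛ : Λ.PosSemidef) (hΛI : ((1 : Matrix d d ℂ) - Λ).PosSemidef)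
    (ε : ℝ) (hε0 : 0 ≤ ε)
    (hsucc : 1 - ε ≤ (Λ * ∑ x, (p x : ℂ) • ρ x).trace.re) :
    ∑ x, p x * traceNorm (hΛ.oldSqrt * ρ x * hΛ.oldSqrt - ρ x) ≤ 2 * Real.sqrt ε :=
  gentle_operator_ensembles_general p hp0 hp1 ρ hρ hρtr Λ hΛ hΛI ε hsucc
end

section
/- (Sen's non-commutative union bound) Let σ be a positive semidefinite operator with Tr σ ≤ 1 on a finite-dimensional Hilbert space, and let Π₁, …, Π_N be orthogonal projectors. Then Tr σ − Tr[Π_N ⋯ Π₁ σ Π₁ ⋯ Π_N] ≤ 2·√(Σ_{i=1}^N Tr[(I − Π_i) σ]). -/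
/-!
On matrices, the positive semidefinite σ induces the (semi-)inner product `⟪X, Y⟫ = Tr[Y σ Xᴴ]`,
for which `Tr[X σ Xᴴ] = ‖X‖²` and left multiplication by an orthogonal projector is an orthogonal
projection. Then `Tr σ = ‖1‖²`, the measured trace is `‖Π_N ⋯ Π₁‖²` and `Tr[(I − Πᵢ) σ] = ‖1 − Πᵢ‖²`,
so the theorem is a statement about orthogonal projections `Tᵢ` of a vector `x` with `‖x‖ ≤ 1`.
Since `x − T (S x) = (x − T x) + T (x − S x)` is an orthogonal sum and `T` is a contraction,
`‖x − T_N ⋯ T₁ x‖² ≤ ∑ ‖x − Tᵢ x‖²`, and `‖x‖² − ‖y‖² ≤ 2 ‖x‖ ‖x − y‖` concludes.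
-/

open Matrix
open scoped ComplexOrder

section InnerProductSpace

variable {𝕜 E : Type*} [RCLike 𝕜] [SeminormedAddCommGroup E] [InnerProductSpace 𝕜 E]

namespace LinearMap.IsSymmetricProjection

variable {T : E →ₗ[𝕜] E}

theorem inner_sub_apply_self_apply (hT : T.IsSymmetricProjection) (x y : E) :
    inner 𝕜 (x - T x) (T y) = 0 := by
  rw [← hT.isSymmetric, map_sub, ← Module.End.mul_apply, hT.isIdempotentElem.eq, sub_self,
    inner_zero_left]

theorem norm_apply_le (hT : T.IsSymmetricProjection) (x : E) : ‖T x‖ ≤ ‖x‖ := by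
  have h := norm_add_sq_eq_norm_sq_add_norm_sq_of_inner_eq_zero (𝕜 := 𝕜) (T x) (x - T x)
    (by rw [← inner_conj_symm, hT.inner_sub_apply_self_apply, map_zero])
  rw [add_sub_cancel] at h
  nlinarith [norm_nonneg x, norm_nonneg (T x), mul_self_nonneg ‖x - T x‖]

theorem norm_sub_apply_apply_sq_le (hT : T.IsSymmetricProjection) (S : E →ₗ[𝕜] E) (x : E) :
    ‖x - T (S x)‖ ^ 2 ≤ ‖x - T x‖ ^ 2 + ‖x - S x‖ ^ 2 := by
  have hsplit : x - T (S x) = (x - T x) + T (x - S x) := by rw [map_sub]; abel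
  have h := norm_add_sq_eq_norm_sq_add_norm_sq_of_inner_eq_zero (x - T x) (T (x - S x))
    (hT.inner_sub_apply_self_apply x _)
  rw [← hsplit] at h
  nlinarith [hT.norm_apply_le (x - S x), norm_nonneg (T (x - S x))]

end LinearMap.IsSymmetricProjection

theorem norm_sub_list_prod_apply_sq_le (L : List (E →ₗ[𝕜] E))
    (hL : ∀ T ∈ L, T.IsSymmetricProjection) (x : E) :
    ‖x - L.prod x‖ ^ 2 ≤ (L.map fun T => ‖x - T x‖ ^ 2).sum := by
  induction L with
  | nil => simp
  | cons T L ih =>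
    rw [List.forall_mem_cons] at hL
    rw [List.prod_cons, Module.End.mul_apply, List.map_cons, List.sum_cons]
    exact (hL.1.norm_sub_apply_apply_sq_le _ x).trans (add_le_add_right (ih hL.2) _)

theorem sq_norm_sub_sq_norm_le {F : Type*} [SeminormedAddCommGroup F] (x y : F) :
    ‖x‖ ^ 2 - ‖y‖ ^ 2 ≤ 2 * ‖x‖ * ‖x - y‖ := by
  rcases le_total ‖y‖ ‖x‖ with hyx | hxy
  · have := mul_le_mul (norm_sub_norm_le x y) (add_le_add_right hyx ‖x‖) (by positivity)
      (norm_nonneg _)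
    nlinarith
  · nlinarith [norm_nonneg x, norm_nonneg (x - y)]

theorem sq_norm_sub_sq_norm_list_prod_apply_le (L : List (E →ₗ[𝕜] E))
    (hL : ∀ T ∈ L, T.IsSymmetricProjection) {x : E} (hx : ‖x‖ ≤ 1) :
    ‖x‖ ^ 2 - ‖L.prod x‖ ^ 2 ≤ 2 * √(L.map fun T => ‖x - T x‖ ^ 2).sum := by
  have hdist : ‖x - L.prod x‖ ≤ √(L.map fun T => ‖x - T x‖ ^ 2).sum :=
    Real.le_sqrt_of_sq_le (norm_sub_list_prod_apply_sq_le L hL x)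
  calc ‖x‖ ^ 2 - ‖L.prod x‖ ^ 2 ≤ 2 * ‖x‖ * ‖x - L.prod x‖ := sq_norm_sub_sq_norm_le _ _
    _ ≤ 2 * √(L.map fun T => ‖x - T x‖ ^ 2).sum := by
      nlinarith [norm_nonneg x, norm_nonneg (x - L.prod x)]

end InnerProductSpace

namespace Matrix

variable {d : Type*} [Fintype d]

theorem conjTranspose_list_prod_reverse [DecidableEq d] {L : List (Matrix d d ℂ)}
    (hL : ∀ A ∈ L, A.IsHermitian) : L.reverse.prodᴴ = L.prod := by
  rw [conjTranspose_list_prod, List.map_reverse, List.reverse_reverse,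
    List.map_congr_left hL, List.map_id']

theorem IsHermitian.trace_mul_mul_conjTranspose_of_isIdempotentElem {Q : Matrix d d ℂ}
    (hQ : Q.IsHermitian) (hQQ : IsIdempotentElem Q) (σ : Matrix d d ℂ) :
    (Q * σ * Qᴴ).trace = (Q * σ).trace := by
  rw [hQ.eq, trace_mul_cycle, hQQ.eq]

variable {σ : Matrix d d ℂ}

theorem norm_sq_eq_re_trace_mul_mul_conjTranspose (hσ : σ.PosSemidef) (X : Matrix d d ℂ) :
    letI := σ.toMatrixSeminormedAddCommGroup hσ
    ‖X‖ ^ 2 = (X * σ * Xᴴ).trace.re := by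
  let := σ.toMatrixSeminormedAddCommGroup hσ
  let := σ.toMatrixInnerProductSpace hσ
  rw [← inner_self_eq_norm_sq (𝕜 := ℂ)]
  rfl

theorem isSymmetricProjection_mulLeft (hσ : σ.PosSemidef) {P : Matrix d d ℂ}
    (hP : P.IsHermitian) (hPP : IsIdempotentElem P) :
    letI := σ.toMatrixSeminormedAddCommGroup hσ
    letI := σ.toMatrixInnerProductSpace hσ
    (LinearMap.mulLeft ℂ P).IsSymmetricProjection := by
  let := σ.toMatrixSeminormedAddCommGroup hσ
  let := σ.toMatrixInnerProductSpace hσ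
  refine ⟨?_, fun X Y => ?_⟩
  · ext X : 1
    simp [Module.End.mul_apply, ← Matrix.mul_assoc, hPP.eq]
  · change (Y * σ * (P * X)ᴴ).trace = (P * Y * σ * Xᴴ).trace
    rw [conjTranspose_mul, hP.eq, ← Matrix.mul_assoc, trace_mul_comm, Matrix.mul_assoc P,
      Matrix.mul_assoc P]

end Matrix

/-- Sen's non-commutative union bound: for a subnormalized state σ ≥ 0, Tr σ ≤ 1, and
orthogonal projectors Π₁, …, Π_N,
Tr σ − Tr[Π_N ⋯ Π₁ σ Π₁ ⋯ Π_N] ≤ 2 √(Σᵢ Tr[(I − Πᵢ)σ]). -/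
theorem sen_noncommutative_union_bound {d : Type*} [Fintype d] [DecidableEq d]
    (N : ℕ) (σ : Matrix d d ℂ) (hσ : σ.PosSemidef) (hσtr : σ.trace.re ≤ 1)
    (P : Fin N → Matrix d d ℂ)
    (hherm : ∀ i, (P i).IsHermitian) (hproj : ∀ i, P i * P i = P i) :
    σ.trace.re -
      ((List.ofFn P).reverse.prod * σ * (List.ofFn P).prod).trace.re ≤
    2 * Real.sqrt (∑ i, (((1 : Matrix d d ℂ) - P i) * σ).trace.re) := by
  let := σ.toMatrixSeminormedAddCommGroup hσ
  let := σ.toMatrixInnerProductSpace hσ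
  have hnorm := norm_sq_eq_re_trace_mul_mul_conjTranspose hσ
  let L := (List.ofFn P).reverse.map (Algebra.lmul ℂ (Matrix d d ℂ))
  have hL : ∀ T ∈ L, T.IsSymmetricProjection := by
    simp only [L, List.mem_map, List.mem_reverse, List.mem_ofFn]
    rintro _ ⟨_, ⟨i, rfl⟩, rfl⟩
    exact isSymmetricProjection_mulLeft hσ (hherm i) (hproj i)
  have hx : ‖(1 : Matrix d d ℂ)‖ ≤ 1 := by
    rw [← sq_le_one_iff₀ (norm_nonneg _), hnorm, Matrix.one_mul, conjTranspose_one, Matrix.mul_one]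
    exact hσtr
  have hprod : L.prod 1 = (List.ofFn P).reverse.prod := by
    rw [← map_list_prod, Algebra.coe_lmul_eq_mul, LinearMap.mul_apply', Matrix.mul_one]
  have herr (i : Fin N) : (((1 : Matrix d d ℂ) - P i) * σ).trace.re = ‖1 - P i‖ ^ 2 := by
    rw [hnorm, (isHermitian_one.sub (hherm i)).trace_mul_mul_conjTranspose_of_isIdempotentElem
      (IsIdempotentElem.one_sub (hproj i))]
  have hsum : (L.map fun T => ‖1 - T 1‖ ^ 2).sum =
      ∑ i, (((1 : Matrix d d ℂ) - P i) * σ).trace.re := by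
    simp [L, List.sum_ofFn, herr]
  have key := sq_norm_sub_sq_norm_list_prod_apply_le L hL hx
  rw [hprod, hsum, hnorm, hnorm, conjTranspose_list_prod_reverse (by simpa using hherm)] at key
  simpa using key
end

section
/- For the special case of two projectors, if σ is a density operator and P, Q are orthogonal projectors, then 1 − Tr[Q P σ P Q] ≤ 2·√(Tr[(I − P)σ] + Tr[(I − Q)σ]). -/
/-!
Write `σ = S Sᴴ` and measure matrices in the Hilbert–Schmidt (Frobenius) norm. Then `‖S‖ = 1`,
`‖QPS‖² = Tr[QPσPQ]` and `‖(1 - P)S‖² = Tr[(1 - P)σ]`. The decomposition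
`S - QPS = Q(1 - P)S + (1 - Q)S` is orthogonal, and projectors are contractions, so
`‖S - QPS‖² ≤ Tr[(1 - P)σ] + Tr[(1 - Q)σ]`. Finally, for a unit vector `x` and `‖y‖ ≤ 1`,
`1 - ‖y‖² ≤ 2 (‖x‖ - ‖y‖) ≤ 2 ‖x - y‖`.
-/

open Matrix
open scoped ComplexOrder

attribute [local instance] Matrix.frobeniusNormedAddCommGroup

namespace Matrix

variable {𝕜 m n : Type*} [RCLike 𝕜] [Fintype m] [Fintype n]

theorem frobenius_norm_sq_eq_re_trace_conjTranspose_mul (A : Matrix m n 𝕜) :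
    ‖A‖ ^ 2 = RCLike.re (Aᴴ * A).trace := by
  rw [frobenius_norm_def, ← Real.sqrt_eq_rpow, Real.sq_sqrt (by positivity)]
  simp only [trace, diag, mul_apply, conjTranspose_apply, map_sum, Real.rpow_two]
  rw [Finset.sum_comm]
  simp only [RCLike.star_def, RCLike.conj_mul, ← RCLike.ofReal_pow, RCLike.ofReal_re]

theorem frobenius_norm_sq_eq_re_trace_mul_conjTranspose (A : Matrix m n 𝕜) :
    ‖A‖ ^ 2 = RCLike.re (A * Aᴴ).trace := by
  rw [← frobenius_norm_conjTranspose, frobenius_norm_sq_eq_re_trace_conjTranspose_mul,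
    conjTranspose_conjTranspose]

theorem PosSemidef.exists_eq_mul_conjTranspose [DecidableEq n] {A : Matrix n n 𝕜}
    (hA : A.PosSemidef) : ∃ S : Matrix n n 𝕜, A = S * Sᴴ := by
  open scoped MatrixOrder in
  exact ⟨CFC.sqrt A, by
    rw [(CFC.sqrt_nonneg A).posSemidef.isHermitian.eq, CFC.sqrt_mul_sqrt_self A hA.nonneg]⟩

variable {P : Matrix m m 𝕜}

theorem frobenius_norm_mul_sq_of_isStarProjection (hP : IsStarProjection P) (A : Matrix m n 𝕜) :
    ‖P * A‖ ^ 2 = RCLike.re (P * (A * Aᴴ)).trace := by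
  rw [frobenius_norm_sq_eq_re_trace_conjTranspose_mul, conjTranspose_mul,
    ← star_eq_conjTranspose P, hP.isSelfAdjoint.star_eq, Matrix.mul_assoc, ← Matrix.mul_assoc P,
    hP.isIdempotentElem.eq, trace_mul_comm, Matrix.mul_assoc]

variable [DecidableEq m]

theorem frobenius_norm_add_sq_of_isStarProjection (hP : IsStarProjection P)
    (A B : Matrix m n 𝕜) : ‖P * A + (1 - P) * B‖ ^ 2 = ‖P * A‖ ^ 2 + ‖(1 - P) * B‖ ^ 2 := by
  have hPs : Pᴴ = P := hP.isSelfAdjoint.star_eq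
  have hcross₁ : (P * A)ᴴ * ((1 - P) * B) = 0 := by
    rw [conjTranspose_mul, hPs, Matrix.mul_assoc, ← Matrix.mul_assoc P, hP.mul_one_sub_self,
      Matrix.zero_mul, Matrix.mul_zero]
  have hcross₂ : ((1 - P) * B)ᴴ * (P * A) = 0 := by
    rw [conjTranspose_mul, conjTranspose_sub, conjTranspose_one, hPs, Matrix.mul_assoc,
      ← Matrix.mul_assoc (1 - P), hP.one_sub_mul_self, Matrix.zero_mul, Matrix.mul_zero]
  simp only [frobenius_norm_sq_eq_re_trace_conjTranspose_mul, conjTranspose_add, Matrix.add_mul,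
    Matrix.mul_add, hcross₁, hcross₂, add_zero, zero_add, trace_add, map_add]

theorem frobenius_norm_mul_le_of_isStarProjection (hP : IsStarProjection P) (A : Matrix m n 𝕜) :
    ‖P * A‖ ≤ ‖A‖ := by
  have h := frobenius_norm_add_sq_of_isStarProjection hP A A
  rw [← Matrix.add_mul, add_sub_cancel, Matrix.one_mul] at h
  nlinarith [norm_nonneg (P * A), norm_nonneg A, sq_nonneg ‖(1 - P) * A‖]

end Matrix

theorem one_sub_norm_sq_le_two_mul_norm_sub {E : Type*} [SeminormedAddCommGroup E] {x y : E}
    (hx : ‖x‖ = 1) (hy : ‖y‖ ≤ 1) : 1 - ‖y‖ ^ 2 ≤ 2 * ‖x - y‖ := by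
  nlinarith [norm_sub_norm_le x y, norm_nonneg y]

/-- The N = 2 instance of Sen's non-commutative union bound: for a density operator σ
and orthogonal projectors P, Q,
1 − Tr[Q P σ P Q] ≤ 2 √(Tr[(I − P)σ] + Tr[(I − Q)σ]). -/
theorem sen_union_bound_two_projectors {d : Type*} [Fintype d] [DecidableEq d]
    (σ P Q : Matrix d d ℂ)
    (hσ : σ.PosSemidef) (hσtr : σ.trace = 1)
    (hP : P.IsHermitian) (hPP : P * P = P)
    (hQ : Q.IsHermitian) (hQQ : Q * Q = Q) :
    1 - (Q * P * σ * P * Q).trace.re ≤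
      2 * Real.sqrt ((((1 : Matrix d d ℂ) - P) * σ).trace.re +
        (((1 : Matrix d d ℂ) - Q) * σ).trace.re) := by
  obtain ⟨S, rfl⟩ := hσ.exists_eq_mul_conjTranspose
  have hPproj : IsStarProjection P := ⟨hPP, hP⟩
  have hQproj : IsStarProjection Q := ⟨hQQ, hQ⟩
  have hS : ‖S‖ = 1 := by
    rw [← pow_eq_one_iff_of_nonneg (norm_nonneg S) two_ne_zero,
      frobenius_norm_sq_eq_re_trace_mul_conjTranspose, hσtr, RCLike.one_re]
  have hQPS : ‖Q * (P * S)‖ ^ 2 = (Q * P * (S * Sᴴ) * P * Q).trace.re := by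
    rw [frobenius_norm_mul_sq_of_isStarProjection hQproj, trace_mul_comm _ Q, conjTranspose_mul,
      hP.eq]
    simp only [← mul_assoc, hQQ, RCLike.re_to_complex]
  have hQPS_le : ‖Q * (P * S)‖ ≤ 1 :=
    hS ▸ (frobenius_norm_mul_le_of_isStarProjection hQproj _).trans
      (frobenius_norm_mul_le_of_isStarProjection hPproj S)
  have hdist : ‖S - Q * (P * S)‖ ^ 2 ≤ (((1 : Matrix d d ℂ) - P) * (S * Sᴴ)).trace.re +
      (((1 : Matrix d d ℂ) - Q) * (S * Sᴴ)).trace.re := by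
    have hsplit : S - Q * (P * S) = Q * ((1 - P) * S) + (1 - Q) * S := by
      simp only [Matrix.mul_sub, Matrix.sub_mul, Matrix.one_mul]; abel
    calc ‖S - Q * (P * S)‖ ^ 2 = ‖Q * ((1 - P) * S)‖ ^ 2 + ‖(1 - Q) * S‖ ^ 2 := by
          rw [hsplit, frobenius_norm_add_sq_of_isStarProjection hQproj]
      _ ≤ ‖(1 - P) * S‖ ^ 2 + ‖(1 - Q) * S‖ ^ 2 := by
          gcongr; exact frobenius_norm_mul_le_of_isStarProjection hQproj _
      _ = _ := congr_arg₂ (· + ·) (frobenius_norm_mul_sq_of_isStarProjection hPproj.one_sub S)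
          (frobenius_norm_mul_sq_of_isStarProjection hQproj.one_sub S)
  calc 1 - (Q * P * (S * Sᴴ) * P * Q).trace.re = 1 - ‖Q * (P * S)‖ ^ 2 := by rw [hQPS]
    _ ≤ 2 * ‖S - Q * (P * S)‖ := one_sub_norm_sq_le_two_mul_norm_sub hS hQPS_le
    _ ≤ _ := by gcongr; exact Real.le_sqrt_of_sq_le hdist
end

section
/- The geometric distribution p(n) = N^n/(N+1)^{n+1} maximizes Shannon entropy among all probability distributions q on ℕ with mean Σ_n n·q(n) ≤ N; hence H(q) ≤ g(N) for all such q. -/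
/-- g(N) = (N+1)log₂(N+1) − N log₂ N. -/
noncomputable def gEntropy (N : ℝ) : ℝ :=
  (N + 1) * Real.logb 2 (N + 1) - N * Real.logb 2 N

/-!
Gibbs' inequality `∑ q log p ≤ ∑ q log q`, applied with the geometric weights
`p n = Nⁿ / (N+1)ⁿ⁺¹`, bounds the entropy of `q` by the cross entropy
`-∑ q log p = log (N+1) + (∑ n q n) log ((N+1)/N)`, which is affine in the mean of `q`
and equals `g(N)` (in nats) when the mean is `N`.
-/

open Real

lemma mul_log_sub_mul_log_le_sub {p q : ℝ} (hp : 0 < p) (hq : 0 ≤ q) :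
    q * log p - q * log q ≤ p - q := by
  rcases hq.eq_or_lt with rfl | hq
  · simpa using hp.le
  have h := mul_le_mul_of_nonneg_left (log_le_sub_one_of_pos (div_pos hp hq)) hq.le
  rwa [log_div hp.ne' hq.ne', mul_sub, mul_sub, mul_div_cancel₀ _ hq.ne', mul_one] at h

theorem hasSum_mul_log_le {ι : Type*} {p q : ι → ℝ} {a b c d : ℝ}
    (hp : ∀ i, 0 < p i) (hq : ∀ i, 0 ≤ q i) (hpb : HasSum p b) (hqa : HasSum q a) (hba : b ≤ a)
    (hc : HasSum (fun i => q i * log (p i)) c) (hd : HasSum (fun i => q i * log (q i)) d) :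
    c ≤ d := by
  have := hasSum_le (fun i => mul_log_sub_mul_log_le_sub (hp i) (hq i)) (hc.sub hd) (hpb.sub hqa)
  linarith

noncomputable def thermalWeight (N : ℝ) (n : ℕ) : ℝ := N ^ n / (N + 1) ^ (n + 1)

lemma thermalWeight_pos {N : ℝ} (hN : 0 < N) (n : ℕ) : 0 < thermalWeight N n := by
  unfold thermalWeight; positivity

lemma thermalWeight_eq_mul_geometric (N : ℝ) :
    thermalWeight N = fun n => (N + 1)⁻¹ * (N / (N + 1)) ^ n := by
  funext n
  rw [thermalWeight, div_pow, pow_succ]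
  field_simp

lemma hasSum_thermalWeight {N : ℝ} (hN : 0 ≤ N) : HasSum (thermalWeight N) 1 := by
  have hN1 : 0 < N + 1 := by linarith
  have hratio : N / (N + 1) < 1 := (div_lt_one hN1).2 (lt_add_one N)
  have hcomplement : 1 - N / (N + 1) = (N + 1)⁻¹ := by field_simp; ring
  have h := (hasSum_geometric_of_lt_one (by positivity) hratio).mul_left (N + 1)⁻¹
  rwa [hcomplement, inv_inv, inv_mul_cancel₀ hN1.ne', ← thermalWeight_eq_mul_geometric] at h

lemma log_thermalWeight {N : ℝ} (hN : 0 < N) (n : ℕ) :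
    log (thermalWeight N n) = n * log N - (n + 1) * log (N + 1) := by
  rw [thermalWeight, log_div (by positivity) (by positivity), log_pow, log_pow]
  push_cast
  ring

theorem le_of_hasSum_mul_log_of_mean_le {N M H : ℝ} {q : ℕ → ℝ} (hN : 0 < N)
    (hq : ∀ n, 0 ≤ q n) (hq1 : HasSum q 1) (hM : HasSum (fun n : ℕ => (n : ℝ) * q n) M)
    (hMN : M ≤ N) (hH : HasSum (fun n => q n * log (q n)) H) :
    N * log N - (N + 1) * log (N + 1) ≤ H := by
  have hcross : HasSum (fun n => q n * log (thermalWeight N n))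
      (M * log N - (M + 1) * log (N + 1)) := by
    refine ((hM.mul_right (log N)).sub ((hM.add hq1).mul_right (log (N + 1)))).congr_fun
      fun n => ?_
    rw [log_thermalWeight hN]
    ring
  have hgibbs := hasSum_mul_log_le (thermalWeight_pos hN) hq (hasSum_thermalWeight hN.le) hq1
    le_rfl hcross hH
  have hslack : 0 ≤ (N - M) * (log (N + 1) - log N) :=
    mul_nonneg (sub_nonneg.2 hMN) (sub_nonneg.2 (log_le_log hN (lt_add_one N).le))
  linarith

/-- Maximum-entropy property of the geometric distribution: any probability
distribution q on ℕ with mean at most N has Shannon entropy at most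
g(N) = (N+1)log₂(N+1) − N log₂ N, the entropy of the geometric (thermal)
distribution p(n) = Nⁿ/(N+1)^{n+1} with mean N. -/
theorem thermal_maximizes_entropy (N : ℝ) (hN : 0 < N)
    (q : ℕ → ℝ) (hq0 : ∀ n, 0 ≤ q n)
    (hqsum : Summable q) (hq1 : (∑' n : ℕ, q n) = 1)
    (hmean_sum : Summable (fun n : ℕ => (n : ℝ) * q n))
    (hmean : (∑' n : ℕ, (n : ℝ) * q n) ≤ N)
    (hent_sum : Summable (fun n : ℕ => q n * Real.logb 2 (q n))) :
    -(∑' n : ℕ, q n * Real.logb 2 (q n)) ≤ gEntropy N := by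
  have hlog2 : 0 < log 2 := log_pos one_lt_two
  have hent_sum' : Summable fun n => q n * log (q n) := by
    simpa only [logb, mul_div_assoc', div_mul_cancel₀ _ hlog2.ne'] using
      hent_sum.mul_right (log 2)
  have hbound := le_of_hasSum_mul_log_of_mean_le hN hq0 (hq1 ▸ hqsum.hasSum) hmean_sum.hasSum
    hmean hent_sum'.hasSum
  have hg : gEntropy N = -(N * log N - (N + 1) * log (N + 1)) / log 2 := by
    unfold gEntropy logb
    ring
  simp only [logb, mul_div_assoc', tsum_div_const, hg, ← neg_div]
  exact div_le_div_of_nonneg_right (neg_le_neg hbound) hlog2.le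
end
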